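/- Let $\varphi : C_p(X) \to C_p(Y)$ be a continuous linear map, $y \in \beta Y$, and let $U$ be an open subset of $\beta X$ containing $s_\varphi(y)$. If $f \in C_p(X)$ satisfies $f[U \cap X] \subseteq \{0\}$, then $\widetilde{\varphi(f)}(y) = 0$. -/

import Mathlib

/-- The topology of pointwise convergence on `C(X, ℝ)`. -/
def CpTop (X : Type) [TopologicalSpace X] : TopologicalSpace C(X, ℝ) :=
  TopologicalSpace.induced (fun f => (f : X → ℝ)) Pi.topologicalSpace

/-- Continuity of a linear map `C_p(X) → C_p(Y)` with respect to the topologies of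
pointwise convergence. -/
def CpContinuous {X Y : Type} [TopologicalSpace X] [TopologicalSpace Y]
    (φ : C(X, ℝ) →ₗ[ℝ] C(Y, ℝ)) : Prop :=
  @Continuous _ _ (CpTop X) (CpTop Y) φ

/-- The support of `y` with respect to `φ`: all `x ∈ X` such that every open
neighbourhood `U` of `x` admits `f` vanishing off `U` with `φ f y ≠ 0`. -/
def suppMap {X Y : Type} [TopologicalSpace X] [TopologicalSpace Y]
    (φ : C(X, ℝ) →ₗ[ℝ] C(Y, ℝ)) (y : Y) : Set X :=
  {x | ∀ U : Set X, IsOpen U → x ∈ U →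
    ∃ f : C(X, ℝ), (∀ z, z ∉ U → f z = 0) ∧ φ f y ≠ 0}

/-- The continuous extension of `g ∈ C(Z, ℝ)` to a map `βZ → ℝ ∪ {∞}` into the one-point
compactification of `ℝ`. -/
noncomputable def extOP {Z : Type} [TopologicalSpace Z] (g : C(Z, ℝ)) :
    StoneCech Z → OnePoint ℝ :=
  stoneCechExtend (g := fun z => ((g z : ℝ) : OnePoint ℝ))
    (OnePoint.continuous_coe.comp g.continuous)

/-- An open `U ⊆ βX` is `y`-effective (for `y ∈ βY`) if every `f ∈ C(X, ℝ)` vanishing on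
`X \ U` satisfies `(φ f)~(y) = 0`. -/
def YEffective {X Y : Type} [TopologicalSpace X] [TopologicalSpace Y]
    (φ : C(X, ℝ) →ₗ[ℝ] C(Y, ℝ)) (y : StoneCech Y) (U : Set (StoneCech X)) : Prop :=
  ∀ f : C(X, ℝ), (∀ x : X, stoneCechUnit x ∉ U → f x = 0) →
    extOP (φ f) y = ((0 : ℝ) : OnePoint ℝ)

/-- `s_φ(y) ⊆ βX`: the set of points of `βX` all of whose open neighbourhoods are
`y`-ineffective. -/
def sphi {X Y : Type} [TopologicalSpace X] [TopologicalSpace Y]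
    (φ : C(X, ℝ) →ₗ[ℝ] C(Y, ℝ)) (y : StoneCech Y) : Set (StoneCech X) :=
  {x | ∀ U : Set (StoneCech X), IsOpen U → x ∈ U → ¬ YEffective φ y U}


open Filter Topology Set

section aux

variable {Z : Type} [TopologicalSpace Z]

lemma extOP_continuous (g : C(Z, ℝ)) : Continuous (extOP g) :=
  continuous_stoneCechExtend _

lemma extOP_unit (g : C(Z, ℝ)) (z : Z) :
    extOP g (stoneCechUnit z) = ((g z : ℝ) : OnePoint ℝ) :=
  congrFun (stoneCechExtend_extends _) z

lemma comap_unit_neBot (y : StoneCech Z) :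
    NeBot (comap (stoneCechUnit : Z → StoneCech Z) (𝓝 y)) := by
  rw [comap_neBot_iff]
  intro s hs
  rcases mem_nhds_iff.1 hs with ⟨t, hts, hto, hyt⟩
  rcases denseRange_stoneCechUnit.exists_mem_open hto ⟨y, hyt⟩ with ⟨z, hz⟩
  exact ⟨z, hts hz⟩

lemma extOP_zero (y : StoneCech Z) :
    extOP (0 : C(Z, ℝ)) y = ((0 : ℝ) : OnePoint ℝ) := by
  have : extOP (0 : C(Z, ℝ)) = fun _ => ((0 : ℝ) : OnePoint ℝ) := by
    apply Continuous.ext_on denseRange_stoneCechUnit (extOP_continuous _)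
      continuous_const
    rintro _ ⟨z, rfl⟩
    simpa using extOP_unit (0 : C(Z, ℝ)) z
  rw [this]

lemma extOP_add (g h : C(Z, ℝ)) (y : StoneCech Z) (r s : ℝ)
    (hg : extOP g y = ((r : ℝ) : OnePoint ℝ))
    (hh : extOP h y = ((s : ℝ) : OnePoint ℝ)) :
    extOP (g + h) y = ((r + s : ℝ) : OnePoint ℝ) := by
  set F := comap (stoneCechUnit : Z → StoneCech Z) (𝓝 y) with hF
  haveI : NeBot F := comap_unit_neBot y
  have key : ∀ (k : C(Z, ℝ)) (a : ℝ), extOP k y = ((a : ℝ) : OnePoint ℝ) →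
      Tendsto (fun z => k z) F (𝓝 a) := by
    intro k a hk
    have h1 : Tendsto (extOP k) (𝓝 y) (𝓝 ((a : ℝ) : OnePoint ℝ)) := by
      rw [← hk]; exact (extOP_continuous k).continuousAt
    have h2 : Tendsto (fun z => ((k z : ℝ) : OnePoint ℝ)) F (𝓝 ((a : ℝ) : OnePoint ℝ)) := by
      have := h1.comp (tendsto_comap : Tendsto _ F (𝓝 y))
      convert this using 1
      ext z
      exact (extOP_unit k z).symm
    exact (OnePoint.isOpenEmbedding_coe.isEmbedding.tendsto_nhds_iff).2 h2
  have hsum : Tendsto (fun z => g z + h z) F (𝓝 (r + s)) := (key g r hg).add (key h s hh)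
  have h3 : Tendsto (fun z => (((g z + h z : ℝ)) : OnePoint ℝ)) F
      (𝓝 ((r + s : ℝ) : OnePoint ℝ)) :=
    (OnePoint.continuous_coe.tendsto _).comp hsum
  have h4 : Tendsto (fun z => extOP (g + h) (stoneCechUnit z)) F (𝓝 (extOP (g + h) y)) :=
    ((extOP_continuous (g + h)).tendsto _).comp (tendsto_comap : Tendsto _ F (𝓝 y))
  have h5 : (fun z => extOP (g + h) (stoneCechUnit z)) =
      fun z => (((g z + h z : ℝ)) : OnePoint ℝ) := by
    ext z; simpa using extOP_unit (g + h) z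
  rw [h5] at h4
  exact tendsto_nhds_unique h4 h3

lemma extOP_sum {ι : Type} (t : Finset ι) (k : ι → C(Z, ℝ)) (y : StoneCech Z)
    (H : ∀ i ∈ t, extOP (k i) y = ((0 : ℝ) : OnePoint ℝ)) :
    extOP (∑ i ∈ t, k i) y = ((0 : ℝ) : OnePoint ℝ) := by
  classical
  induction t using Finset.induction_on with
  | empty => simpa using extOP_zero (Z := Z) y
  | insert _ _ hnotmem ih =>
    rename_i a s
    rw [Finset.sum_insert hnotmem]
    have := extOP_add (k a) (∑ i ∈ s, k i) y 0 0
      (H a (Finset.mem_insert_self a s))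
      (ih fun i hi => H i (Finset.mem_insert_of_mem hi))
    simpa using this
end aux

theorem extOP_eq_zero_of_vanishes_on_nbhd_of_sphi {X Y : Type}
    [TopologicalSpace X] [TopologicalSpace Y] [T35Space X] [T35Space Y]
    (φ : C(X, ℝ) →ₗ[ℝ] C(Y, ℝ)) (hφ : CpContinuous φ) (y : StoneCech Y)
    (U : Set (StoneCech X)) (hU : IsOpen U) (hsU : sphi φ y ⊆ U)
    (f : C(X, ℝ)) (hf : ∀ x : X, stoneCechUnit x ∈ U → f x = 0) :
    extOP (φ f) y = ((0 : ℝ) : OnePoint ℝ) := by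
  classical
  have hK : IsCompact (Uᶜ) := hU.isClosed_compl.isCompact
  have hexists : ∀ x : (Uᶜ : Set (StoneCech X)), ∃ V : Set (StoneCech X),
      IsOpen V ∧ ↑x ∈ V ∧ YEffective φ y V := by
    rintro ⟨x, hx⟩
    by_contra hcon
    push_neg at hcon
    exact hx (hsU fun V hV hxV => hcon V hV hxV)
  choose V hVopen hVmem hVeff using hexists
  obtain ⟨t, ht⟩ := hK.elim_finite_subcover V hVopen
    (fun x hx => mem_iUnion.2 ⟨⟨x, hx⟩, hVmem ⟨x, hx⟩⟩)
  let W : Option {i : (Uᶜ : Set (StoneCech X)) // i ∈ t} → Set (StoneCech X) :=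
    fun o => o.elim U fun j => V j.1
  have hWopen : ∀ o, IsOpen (W o) := by
    rintro (_ | j)
    · exact hU
    · exact hVopen j.1
  have hWcover : (univ : Set (StoneCech X)) ⊆ ⋃ o, W o := by
    intro x _
    by_cases hx : x ∈ U
    · exact mem_iUnion.2 ⟨none, hx⟩
    · rcases mem_iUnion₂.1 (ht hx) with ⟨i, hit, hxi⟩
      exact mem_iUnion.2 ⟨some ⟨i, hit⟩, hxi⟩
  obtain ⟨e, he⟩ := PartitionOfUnity.exists_isSubordinate isClosed_univ W hWopen hWcover
  let g : Option {i : (Uᶜ : Set (StoneCech X)) // i ∈ t} → C(X, ℝ) := fun o =>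
    ⟨fun x => e o (stoneCechUnit x) * f x,
      (((e o).continuous).comp continuous_stoneCechUnit).mul f.continuous⟩
  have hfsum : f = ∑ o : Option {i : (Uᶜ : Set (StoneCech X)) // i ∈ t}, g o := by
    ext x
    have h1 := e.sum_eq_one (mem_univ (stoneCechUnit x))
    rw [finsum_eq_sum_of_fintype] at h1
    calc f x = 1 * f x := (one_mul _).symm
    _ = (∑ o, e o (stoneCechUnit x)) * f x := by rw [h1]
    _ = ∑ o, e o (stoneCechUnit x) * f x := Finset.sum_mul _ _ _
    _ = (∑ o : Option {i : (Uᶜ : Set (StoneCech X)) // i ∈ t}, g o) x := by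
        simp [g]
  have hzero : ∀ o, extOP (φ (g o)) y = ((0 : ℝ) : OnePoint ℝ) := by
    rintro (_ | j)
    · have hg0 : g none = 0 := by
        ext x
        by_cases hx : stoneCechUnit x ∈ U
        · simp [g, hf x hx]
        · have h0 : e none (stoneCechUnit x) = 0 :=
            image_eq_zero_of_notMem_tsupport fun hmem => hx (he none hmem)
          simp [g, h0]
      rw [hg0, map_zero]
      exact extOP_zero y
    · apply hVeff j.1 (g (some j))
      intro x hx
      have h0 : e (some j) (stoneCechUnit x) = 0 :=
        image_eq_zero_of_notMem_tsupport fun hmem => hx (he (some j) hmem)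
      simp [g, h0]
  rw [hfsum, map_sum]
  exact extOP_sum Finset.univ _ y fun i _ => hzero i
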